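/- Let G be a finite abelian group of order n, D(G) its generalized dihedral group (assumed non-abelian), \Gamma the commuting graph of D(G), and z = |{g \in G : g^2 = e}|. Then the detour diameter of \Gamma (the maximum detour eccentricity over all vertices) equals 2n - 1 if n/z \le z, and equals n + z^2 - 1 if n/z > z. -/

import Mathlib

/-- The generalized dihedral group `D(G) = G ⋊ C₂`, with `⟨g, false⟩`
representing `(g, 1)` and `⟨g, true⟩` representing `(g, -1)`.
Multiplication is `(g₁, c₁)(g₂, c₂) = (g₁ g₂^{c₁}, c₁ c₂)`, i.e. `-1` acts by inversion. -/
@[ext]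
structure GenDihedral (G : Type) where
  g : G
  b : Bool
  deriving DecidableEq

namespace GenDihedral

variable {G : Type} [CommGroup G]

instance : Mul (GenDihedral G) :=
  ⟨fun a c => ⟨a.g * (if a.b then c.g⁻¹ else c.g), xor a.b c.b⟩⟩

instance : One (GenDihedral G) := ⟨⟨1, false⟩⟩

instance : Inv (GenDihedral G) := ⟨fun a => ⟨if a.b then a.g else a.g⁻¹, a.b⟩⟩

theorem mul_def (a c : GenDihedral G) :
    a * c = ⟨a.g * (if a.b then c.g⁻¹ else c.g), xor a.b c.b⟩ := rfl

theorem one_def : (1 : GenDihedral G) = ⟨1, false⟩ := rfl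

theorem inv_def (a : GenDihedral G) : a⁻¹ = ⟨if a.b then a.g else a.g⁻¹, a.b⟩ := rfl

instance : Group (GenDihedral G) where
  mul_assoc a c d := by
    obtain ⟨g₁, b₁⟩ := a; obtain ⟨g₂, b₂⟩ := c; obtain ⟨g₃, b₃⟩ := d
    cases b₁ <;> cases b₂ <;> cases b₃ <;>
      simp [mul_def, mul_assoc, mul_comm, mul_left_comm, mul_inv, inv_inv]
  one_mul a := by obtain ⟨g, b⟩ := a; cases b <;> simp [mul_def, one_def]
  mul_one a := by obtain ⟨g, b⟩ := a; cases b <;> simp [mul_def, one_def]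
  inv_mul_cancel a := by
    obtain ⟨g, b⟩ := a; cases b <;> simp [mul_def, one_def, inv_def]

instance [Fintype G] : Fintype (GenDihedral G) :=
  Fintype.ofEquiv (G × Bool)
    ⟨fun p => ⟨p.1, p.2⟩, fun x => (x.g, x.b), fun _ => rfl, fun _ => rfl⟩

instance [DecidableEq G] (a c : GenDihedral G) : Decidable (Commute a c) :=
  decidable_of_iff (a * c = c * a) Iff.rfl

end GenDihedral

namespace GenDihedral

/-- The commuting graph of `D(G)`: vertices are the elements of `D(G)`, and two
distinct vertices are adjacent iff they commute. -/
def commGraph (G : Type) [CommGroup G] : SimpleGraph (GenDihedral G) where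
  Adj u v := u ≠ v ∧ u * v = v * u
  symm := ⟨fun _ _ h => ⟨h.1.symm, h.2.symm⟩⟩
  loopless := ⟨fun _ h => h.1 rfl⟩

instance {G : Type} [CommGroup G] [DecidableEq G] : DecidableRel (commGraph G).Adj :=
  fun u v => decidable_of_iff (u ≠ v ∧ u * v = v * u) Iff.rfl

end GenDihedral

/-- The detour eccentricity of a vertex `v` in a graph `Γ`: the maximum length of a
simple path in `Γ` starting at `v` (equivalently, the maximum over all vertices `u`
of the detour distance `d_D(v, u)`, the length of a longest simple `v-u` path). -/
noncomputable def detourEcc {V : Type} (Γ : SimpleGraph V) (v : V) : ℕ :=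
  sSup {n : ℕ | ∃ u : V, ∃ p : Γ.Walk v u, p.IsPath ∧ p.length = n}

/-!
In `D(G)` all rotations `(g, 1)` commute, a rotation `(a, 1)` commutes with a reflection iff
`a² = e`, and reflections `(a, -1)`, `(b, -1)` commute iff `a² = b²`. So the commuting graph is a
clique on the `n` rotations together with `n / z` cliques of `z` reflections, one per square,
attached only to the `z` central rotations `(a, 1)` with `a² = e`.

Along a simple path, a class of reflections is first met either at the start or right after a
central rotation, so the path carries at most `z (z + 1)` reflections. If it carries more than
`z²`, it starts and ends with reflections and every central rotation on it lies between two
reflections; then no other rotation fits on it, and it has at most `z + z (z + 1)` vertices,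
which is at most `n + z²` once `n / z > z`. Conversely, with `m = min (n / z) z`, running
through all rotations but `m` central ones and then through `m` classes, each preceded by one of
those central rotations, gives a path with `n + m z` vertices.
-/

open Finset

section SquareRoots

variable {G : Type} [CommGroup G] [Fintype G] [DecidableEq G]

def sqrts (s : G) : Finset G := {g | g ^ 2 = s}

variable (G) in
def squares : Finset G := univ.image (· ^ 2)

theorem card_sqrts_of_mem_squares {s : G} (hs : s ∈ squares G) :
    #(sqrts s) = #(sqrts (1 : G)) := by
  obtain ⟨g, -, rfl⟩ := mem_image.1 hs
  exact MonoidHom.card_fiber_eq_of_mem_range (powMonoidHom 2) ⟨g, rfl⟩ ⟨1, one_pow 2⟩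

theorem card_sqrts_le (s : G) : #(sqrts s) ≤ #(sqrts (1 : G)) := by
  by_cases hs : s ∈ squares G
  · exact (card_sqrts_of_mem_squares hs).le
  · have : sqrts s = ∅ :=
      filter_eq_empty_iff.2 fun g _ hg => hs (hg ▸ mem_image_of_mem _ (mem_univ g))
    simp [this]

theorem card_squares_mul_card_sqrts_one :
    #(squares G) * #(sqrts (1 : G)) = Fintype.card G := by
  rw [← card_univ, card_eq_sum_card_fiberwise (f := (· ^ 2)) (s := univ) (t := squares G)
    fun g _ => mem_image_of_mem _ (mem_univ g)]
  exact (sum_const_nat fun s hs => card_sqrts_of_mem_squares hs).symm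

theorem one_le_card_sqrts_one : 1 ≤ #(sqrts (1 : G)) :=
  card_pos.2 ⟨1, mem_filter.2 ⟨mem_univ _, one_pow 2⟩⟩

end SquareRoots

namespace GenDihedral

variable {G : Type} [CommGroup G]

theorem commute_mk_false_mk_false (a b : G) :
    Commute (⟨a, false⟩ : GenDihedral G) ⟨b, false⟩ := by
  simp [Commute, SemiconjBy, mul_def, mul_comm]

theorem commute_mk_false_mk_true_iff {a b : G} :
    Commute (⟨a, false⟩ : GenDihedral G) ⟨b, true⟩ ↔ a ^ 2 = 1 := by
  simp [Commute, SemiconjBy, mul_def, mul_comm b, eq_inv_iff_mul_eq_one, pow_two]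

theorem commute_mk_true_mk_true_iff {a b : G} :
    Commute (⟨a, true⟩ : GenDihedral G) ⟨b, true⟩ ↔ a ^ 2 = b ^ 2 := by
  simp [Commute, SemiconjBy, mul_def, ← div_eq_mul_inv, div_eq_div_iff_mul_eq_mul, pow_two]

theorem commute_mk_false_of_sq_eq_one {a : G} (ha : a ^ 2 = 1) (x : GenDihedral G) :
    Commute ⟨a, false⟩ x := by
  obtain ⟨g, _ | _⟩ := x
  · exact commute_mk_false_mk_false a g
  · exact commute_mk_false_mk_true_iff.2 ha

theorem sq_eq_one_of_commute {x y : GenDihedral G} (h : Commute x y) (hx : x.b = false)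
    (hy : y.b = true) : x.g ^ 2 = 1 := by
  obtain ⟨a, _⟩ := x; obtain ⟨b, _⟩ := y
  subst hx hy
  exact commute_mk_false_mk_true_iff.1 h

theorem sq_eq_sq_of_commute {x y : GenDihedral G} (h : Commute x y) (hx : x.b = true)
    (hy : y.b = true) : x.g ^ 2 = y.g ^ 2 := by
  obtain ⟨a, _⟩ := x; obtain ⟨b, _⟩ := y
  subst hx hy
  exact commute_mk_true_mk_true_iff.1 h

theorem isChain_adj_of_isChain_commute {l : List (GenDihedral G)} (hc : l.IsChain Commute)
    (hn : l.Nodup) : l.IsChain (commGraph G).Adj := by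
  induction hc with
  | nil => exact .nil
  | singleton a => exact .singleton a
  | cons_cons hab _ ih =>
    exact .cons_cons ⟨fun h => (List.nodup_cons.1 hn).1 (h ▸ List.mem_cons_self), hab⟩
      (ih hn.of_cons)

end GenDihedral

namespace SimpleGraph.Walk

variable {V : Type*} [DecidableEq V] {Γ : SimpleGraph V} (P : V → Prop) [DecidablePred P]

def entries {u v : V} (p : Γ.Walk u v) : Finset V :=
  (p.darts.toFinset.filter fun d => ¬P d.fst ∧ P d.snd).image (·.fst)

def exits {u v : V} (p : Γ.Walk u v) : Finset V :=
  (p.darts.toFinset.filter fun d => P d.fst ∧ ¬P d.snd).image (·.snd)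

variable {P}

theorem mem_entries {u v x : V} {p : Γ.Walk u v} :
    x ∈ p.entries P ↔ ∃ d ∈ p.darts, d.fst = x ∧ ¬P x ∧ P d.snd := by
  simp only [entries, mem_image, mem_filter, List.mem_toFinset]
  grind

theorem mem_exits {u v x : V} {p : Γ.Walk u v} :
    x ∈ p.exits P ↔ ∃ d ∈ p.darts, d.snd = x ∧ P d.fst ∧ ¬P x := by
  simp only [exits, mem_image, mem_filter, List.mem_toFinset]
  grind

theorem entries_reverse {u v : V} (p : Γ.Walk u v) : p.reverse.entries P = p.exits P := by
  ext x
  simp only [mem_entries, mem_exits, darts_reverse, List.mem_reverse, List.mem_map]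
  grind [Dart.symm_toProd]

theorem entries_subset_entries_cons {u v w : V} (h : Γ.Adj u v) (p : Γ.Walk v w) :
    p.entries P ⊆ (cons h p).entries P := by
  intro x
  simp only [mem_entries, darts_cons, List.mem_cons]
  grind

theorem entries_subset_support {u v : V} (p : Γ.Walk u v) :
    p.entries P ⊆ p.support.toFinset := by
  intro x hx
  obtain ⟨d, hd, rfl, -⟩ := mem_entries.1 hx
  exact List.mem_toFinset.2 (p.dart_fst_mem_support_of_mem_darts hd)

theorem entries_cons_of_not_and {u v w : V} (h : Γ.Adj u v) (p : Γ.Walk v w)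
    (huv : ¬(¬P u ∧ P v)) : (cons h p).entries P = p.entries P := by
  ext x
  simp only [mem_entries, darts_cons, List.mem_cons]
  grind

theorem entries_cons_of_and {u v w : V} (h : Γ.Adj u v) (p : Γ.Walk v w)
    (hu : ¬P u) (hv : P v) : (cons h p).entries P = insert u (p.entries P) := by
  ext x
  simp only [mem_insert, mem_entries, darts_cons, List.mem_cons]
  constructor
  · rintro ⟨d, rfl | hd, rfl, hx⟩
    · exact .inl rfl
    · exact .inr ⟨d, hd, rfl, hx⟩
  · rintro (rfl | ⟨d, hd, hx⟩)
    · exact ⟨_, .inl rfl, rfl, hu, hv⟩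
    · exact ⟨d, .inr hd, hx⟩

/-- Each class of `κ` is first reached at the start of the path or right after an entry. -/
theorem IsPath.card_image_filter_support_le {β : Type*} [DecidableEq β] {κ : V → β}
    (hκ : ∀ x y, Γ.Adj x y → P x → P y → κ x = κ y) {u v : V} {p : Γ.Walk u v}
    (hp : p.IsPath) :
    #((p.support.toFinset.filter P).image κ) ≤ #(p.entries P) + if P u then 1 else 0 := by
  induction p with
  | @nil u => by_cases hu : P u <;> simp [hu, filter_singleton, entries]
  | @cons u v w h p ih =>
    rw [cons_isPath_iff] at hp
    have ih := ih hp.1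
    have hv : v ∈ p.support.toFinset := List.mem_toFinset.2 p.start_mem_support
    rw [support_cons, List.toFinset_cons, filter_insert]
    by_cases hu : P u <;> by_cases hPv : P v
    · have : κ u ∈ (p.support.toFinset.filter P).image κ :=
        mem_image.2 ⟨v, mem_filter.2 ⟨hv, hPv⟩, (hκ u v h hu hPv).symm⟩
      rw [if_pos hu, image_insert, insert_eq_of_mem this,
        entries_cons_of_not_and h p (by tauto)]
      simpa [hu, hPv] using ih
    · rw [if_pos hu, entries_cons_of_not_and h p (by tauto)]
      simp only [hu, hPv, if_true, if_false] at ih ⊢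
      rw [image_insert]
      exact (card_insert_le _ _).trans (by omega)
    · have hue : u ∉ p.entries P := fun hue =>
        hp.2 (List.mem_toFinset.1 (entries_subset_support p hue))
      rw [if_neg hu, entries_cons_of_and h p hu hPv, card_insert_of_notMem hue]
      simpa [hu, hPv] using ih
    · rw [if_neg hu, entries_cons_of_not_and h p (by tauto)]
      simpa [hu, hPv] using ih

theorem mem_entries_or_exists_dart {u w x : V} (p : Γ.Walk u w) (hw : P w)
    (hx : x ∈ p.support) (hPx : ¬P x) :
    x ∈ p.entries P ∨ ∃ d ∈ p.darts, ¬P d.fst ∧ d.snd ∈ p.entries P := by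
  induction p generalizing x with
  | nil => exact absurd (List.mem_singleton.1 hx ▸ hw) hPx
  | @cons u v w h p ih =>
    have hsub := entries_subset_entries_cons (P := P) h p
    have lift : (∃ d ∈ p.darts, ¬P d.fst ∧ d.snd ∈ p.entries P) →
        ∃ d ∈ (cons h p).darts, ¬P d.fst ∧ d.snd ∈ (cons h p).entries P :=
      fun ⟨d, hd, hd'⟩ => ⟨d, List.mem_cons_of_mem _ hd, hd'.1, hsub hd'.2⟩
    rcases List.mem_cons.1 (support_cons h p ▸ hx) with rfl | hx
    · by_cases hPv : P v
      · exact .inl (mem_entries.2 ⟨⟨(x, v), h⟩, List.mem_cons_self, rfl, hPx, hPv⟩)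
      · rcases ih hw p.start_mem_support hPv with hv | hd
        · exact .inr ⟨⟨(x, v), h⟩, List.mem_cons_self, hPx, hsub hv⟩
        · exact .inr (lift hd)
    · exact (ih hw hx hPx).imp (@hsub x) lift

/-- Otherwise a step between two vertices outside `P` leads to an entry, which then has two
predecessors on the path. -/
theorem IsPath.filter_not_support_subset_entries {u w : V} {p : Γ.Walk u w} (hp : p.IsPath)
    (hw : P w) (h : p.entries P ⊆ p.exits P) :
    p.support.toFinset.filter (¬P ·) ⊆ p.entries P := by
  intro x hx
  rw [mem_filter, List.mem_toFinset] at hx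
  refine (mem_entries_or_exists_dart p hw hx.1 hx.2).resolve_right ?_
  rintro ⟨d, hd, hPd, hdE⟩
  obtain ⟨d', hd', hsnd, hPd', -⟩ := mem_exits.1 (h hdE)
  have hnodup : (p.darts.map (·.snd)).Nodup := by
    rw [map_snd_darts]
    exact hp.support_nodup.sublist (List.tail_sublist _)
  exact hPd (List.inj_on_of_nodup_map hnodup hd' hd hsnd ▸ hPd')

end SimpleGraph.Walk

theorem SimpleGraph.exists_isPath_of_isChain {V : Type*} {Γ : SimpleGraph V} {l : List V}
    (hne : l ≠ []) (hc : l.IsChain Γ.Adj) (hn : l.Nodup) :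
    ∃ (u v : V) (p : Γ.Walk u v), p.IsPath ∧ p.length + 1 = l.length :=
  ⟨_, _, .ofSupport l hne hc, .mk' (by simpa using hn), by
    have := List.length_pos_of_ne_nil hne
    simp only [Walk.length_ofSupport]
    omega⟩

theorem iSup_detourEcc_eq_of_isGreatest {V : Type} {Γ : SimpleGraph V} {M : ℕ}
    (h : IsGreatest {ℓ | ∃ (u v : V) (p : Γ.Walk u v), p.IsPath ∧ p.length = ℓ} M) :
    ⨆ v, detourEcc Γ v = M := by
  obtain ⟨⟨v₀, u₀, p₀, hp₀, hl₀⟩, hM⟩ := h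
  have : Nonempty V := ⟨v₀⟩
  have hbdd (v : V) : BddAbove {ℓ | ∃ u, ∃ p : Γ.Walk v u, p.IsPath ∧ p.length = ℓ} :=
    ⟨M, fun _ ⟨u, p, hp, hl⟩ => hM ⟨v, u, p, hp, hl⟩⟩
  have hle (v : V) : detourEcc Γ v ≤ M :=
    csSup_le ⟨0, v, .nil, .nil, rfl⟩ fun _ ⟨u, p, hp, hl⟩ => hM ⟨v, u, p, hp, hl⟩
  refine le_antisymm (ciSup_le hle) ?_
  exact (le_csSup (hbdd v₀) ⟨u₀, p₀, hp₀, hl₀⟩).trans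
    (le_ciSup ⟨M, Set.forall_mem_range.2 hle⟩ v₀)

namespace GenDihedral

open SimpleGraph Walk

theorem card_genDihedral {G : Type} [Fintype G] :
    Fintype.card (GenDihedral G) = 2 * Fintype.card G := by
  rw [Fintype.ofEquiv_card, Fintype.card_prod, Fintype.card_bool, mul_comm]

theorem card_filter_not_b_le {G : Type} [Fintype G] (s : Finset (GenDihedral G)) :
    #(s.filter (¬·.b = true)) ≤ Fintype.card G :=
  card_le_card_of_injOn (·.g) (fun _ _ => mem_coe.2 (mem_univ _)) fun x hx y hy hxy => by
    simp only [coe_filter, Bool.not_eq_true, Set.mem_ofPred_eq] at hx hy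
    exact GenDihedral.ext hxy (hx.2.trans hy.2.symm)

variable {G : Type} [CommGroup G] [Fintype G] [DecidableEq G]

variable (G) in
def centralRotations : Finset (GenDihedral G) := (sqrts 1).image (⟨·, false⟩)

theorem mem_centralRotations {x : GenDihedral G} :
    x ∈ centralRotations G ↔ x.b = false ∧ x.g ^ 2 = 1 := by
  obtain ⟨a, b⟩ := x
  simp [centralRotations, sqrts, eq_comm, and_comm]

theorem card_centralRotations : #(centralRotations G) = #(sqrts (1 : G)) :=
  card_image_of_injective _ fun _ _ h => congrArg GenDihedral.g h

theorem entries_subset_centralRotations {u v : GenDihedral G} (p : (commGraph G).Walk u v) :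
    p.entries (·.b = true) ⊆ centralRotations G := by
  intro x hx
  obtain ⟨d, -, rfl, hx, hy⟩ := mem_entries.1 hx
  simp only [Bool.not_eq_true] at hx
  exact mem_centralRotations.2 ⟨hx, sq_eq_one_of_commute d.adj.2 hx hy⟩

theorem exits_subset_centralRotations {u v : GenDihedral G} (p : (commGraph G).Walk u v) :
    p.exits (·.b = true) ⊆ centralRotations G := by
  rw [← entries_reverse]
  exact entries_subset_centralRotations p.reverse

/-- The reflections on a path fall into classes of equal square, each of size at most `z`. -/
theorem card_support_filter_b_le_entries {u v : GenDihedral G} {p : (commGraph G).Walk u v}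
    (hp : p.IsPath) :
    #(p.support.toFinset.filter (·.b = true)) ≤
      #(sqrts (1 : G)) * (#(p.entries (·.b = true)) + if u.b = true then 1 else 0) := by
  refine (card_le_mul_card_image (f := fun x : GenDihedral G => x.g ^ 2) _ _
    fun s _ => ?_).trans (Nat.mul_le_mul_left _ (hp.card_image_filter_support_le
      fun x y (h : (commGraph G).Adj x y) hx hy => sq_eq_sq_of_commute h.2 hx hy))
  refine (card_le_card_of_injOn (·.g) (fun x hx => ?_) fun x hx y hy hxy => ?_).trans
    (card_sqrts_le s)
  · simp only [coe_filter, mem_filter, Set.mem_ofPred_eq] at hx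
    simp [sqrts, hx.2]
  · simp only [coe_filter, mem_filter, Set.mem_ofPred_eq] at hx hy
    exact GenDihedral.ext hxy (hx.1.2.trans hy.1.2.symm)

theorem card_support_filter_b_le_exits {u w : GenDihedral G} {p : (commGraph G).Walk u w}
    (hp : p.IsPath) :
    #(p.support.toFinset.filter (·.b = true)) ≤
      #(sqrts (1 : G)) * (#(p.exits (·.b = true)) + if w.b = true then 1 else 0) := by
  simpa [support_reverse, List.toFinset_reverse, entries_reverse] using
    card_support_filter_b_le_entries hp.reverse

/-- Beyond `z²` reflections, both the entries and the exits of the path must be all `z` central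
rotations, and then every rotation on the path is an entry. -/
theorem card_support_filter_not_b_le_of_lt {u w : GenDihedral G} {p : (commGraph G).Walk u w}
    (hp : p.IsPath)
    (hR : #(sqrts (1 : G)) * #(sqrts (1 : G)) < #(p.support.toFinset.filter (·.b = true))) :
    #(p.support.toFinset.filter (¬·.b = true)) ≤ #(sqrts (1 : G)) := by
  have hE := entries_subset_centralRotations p
  have hEx := exits_subset_centralRotations p
  have hin := card_support_filter_b_le_entries hp
  have hout := card_support_filter_b_le_exits hp
  rw [← card_centralRotations] at *
  generalize hz : #(centralRotations G) = z at *
  have hw : w.b = true := by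
    by_contra h
    rw [if_neg h, add_zero] at hout
    exact hR.not_ge (hout.trans (Nat.mul_le_mul_left z ((card_le_card hEx).trans_eq hz)))
  have hEq : p.entries (·.b = true) = centralRotations G := by
    refine eq_of_subset_of_card_le hE (hz ▸ ?_)
    by_contra! h
    have : (if u.b = true then 1 else 0) ≤ 1 := by split <;> omega
    exact hR.not_ge (hin.trans (Nat.mul_le_mul_left z (by omega)))
  have hExq : p.exits (·.b = true) = centralRotations G := by
    refine eq_of_subset_of_card_le hEx (hz ▸ ?_)
    by_contra! h
    rw [if_pos hw] at hout
    exact hR.not_ge (hout.trans (Nat.mul_le_mul_left z (by omega)))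
  rw [← hz, ← hEq]
  exact card_le_card (hp.filter_not_support_subset_entries hw (hEq.trans hExq.symm).le)

theorem length_add_one_le_of_card_sqrts_lt {u w : GenDihedral G} {p : (commGraph G).Walk u w}
    (hp : p.IsPath) (hzk : #(sqrts (1 : G)) < #(squares G)) :
    p.length + 1 ≤ Fintype.card G + #(sqrts (1 : G)) * #(sqrts (1 : G)) := by
  rw [← length_support, ← List.toFinset_card_of_nodup hp.support_nodup,
    ← card_filter_add_card_filter_not (·.b = true)]
  have hA := card_filter_not_b_le p.support.toFinset
  by_cases hR : #(p.support.toFinset.filter (·.b = true)) ≤ #(sqrts (1 : G)) * #(sqrts (1 : G))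
  · omega
  have hA' := card_support_filter_not_b_le_of_lt hp (not_le.1 hR)
  have hR' := (card_support_filter_b_le_entries hp).trans (Nat.mul_le_mul_left _ (add_le_add
    ((card_le_card (entries_subset_centralRotations p)).trans_eq card_centralRotations)
    (show (if u.b = true then 1 else 0) ≤ 1 by split <;> omega)))
  have hn := card_squares_mul_card_sqrts_one (G := G)
  have hz := one_le_card_sqrts_one (G := G)
  nlinarith

variable {m : ℕ}

noncomputable def block (w s : G) : List (GenDihedral G) :=
  ⟨w, false⟩ :: (sqrts s).toList.map (⟨·, true⟩)

theorem mem_block {w s : G} {x : GenDihedral G} :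
    x ∈ block w s ↔ if x.b then x.g ^ 2 = s else x.g = w := by
  obtain ⟨a, _ | _⟩ := x <;> simp [block, sqrts, eq_comm]

theorem length_block {w s : G} (hs : s ∈ squares G) :
    (block w s).length = #(sqrts (1 : G)) + 1 := by
  simp [block, card_sqrts_of_mem_squares hs]

theorem nodup_block (w s : G) : (block w s).Nodup := by
  refine List.nodup_cons.2 ⟨by simp, (nodup_toList _).map fun _ _ h => ?_⟩
  exact congrArg GenDihedral.g h

theorem isChain_commute_block {w : G} (hw : w ^ 2 = 1) (s : G) :
    (block w s).IsChain Commute := by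
  refine List.isChain_cons.2 ⟨fun y _ => commute_mk_false_of_sq_eq_one hw y, ?_⟩
  refine List.Pairwise.isChain (List.pairwise_map.2 ?_)
  refine List.pairwise_of_forall_mem_list fun a ha b hb => commute_mk_true_mk_true_iff.2 ?_
  simp only [sqrts, mem_toList, mem_filter, mem_univ, true_and] at ha hb
  rw [ha, hb]

noncomputable def longPathSupport (f g : Fin m ↪ G) : List (GenDihedral G) :=
  (univ \ univ.map f).toList.map (⟨·, false⟩) ++
    (List.finRange m).flatMap fun i => block (f i) (g i)

theorem isChain_commute_longPathSupport {f : Fin m ↪ G} (hf : ∀ i, f i ^ 2 = 1)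
    (g : Fin m ↪ G) :
    (longPathSupport f g).IsChain Commute := by
  refine List.IsChain.append ?_ ?_ ?_
  · exact (List.isChain_map _).2 (List.pairwise_of_forall commute_mk_false_mk_false).isChain
  · rw [List.flatMap, List.isChain_flatten (by simp [block])]
    refine ⟨by simpa using fun i => isChain_commute_block (hf i) (g i), ?_⟩
    refine (List.isChain_map _).2 (List.pairwise_of_forall fun i j x _ y hy => ?_).isChain
    simp only [block, List.head?_cons, Option.mem_def, Option.some.injEq] at hy
    exact hy ▸ (commute_mk_false_of_sq_eq_one (hf j) x).symm
  · intro x _ y hy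
    cases m with
    | zero => simp at hy
    | succ m =>
      simp only [List.finRange_succ, List.flatMap_cons, block, List.cons_append, List.head?_cons,
        Option.mem_def, Option.some.injEq] at hy
      exact hy ▸ (commute_mk_false_of_sq_eq_one (hf 0) x).symm

theorem nodup_longPathSupport (f g : Fin m ↪ G) : (longPathSupport f g).Nodup := by
  refine List.nodup_append.2 ⟨(nodup_toList _).map fun _ _ h => congrArg GenDihedral.g h,
    List.nodup_flatMap.2 ⟨fun i _ => nodup_block _ _,
      (List.nodup_finRange m).pairwise_of_forall_ne fun i _ j _ hij x hi hj => ?_⟩, ?_⟩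
  · rw [mem_block] at hi hj
    cases hb : x.b
    · simp only [hb] at hi hj
      exact hij (f.injective (hi.symm.trans hj))
    · simp only [hb, if_true] at hi hj
      exact hij (g.injective (hi.symm.trans hj))
  · rintro _ ha x hx rfl
    obtain ⟨i, -, hi⟩ := List.mem_flatMap.1 hx
    simp only [List.mem_map, mem_toList, mem_sdiff, mem_map, mem_univ, true_and] at ha
    obtain ⟨a, ha, rfl⟩ := ha
    exact ha ⟨i, (mem_block.1 hi).symm⟩

theorem length_longPathSupport (f : Fin m ↪ G) {g : Fin m ↪ G} (hg : ∀ i, g i ∈ squares G) :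
    (longPathSupport f g).length = Fintype.card G + m * #(sqrts (1 : G)) := by
  have hm : m ≤ Fintype.card G := by simpa using Fintype.card_le_of_embedding f
  have hrest : #(univ \ univ.map f) = Fintype.card G - m := by
    rw [card_sdiff_of_subset (subset_univ _), card_univ, card_map, card_univ, Fintype.card_fin]
  simp only [longPathSupport, List.length_append, List.length_map, length_toList, hrest,
    List.length_flatMap, length_block (hg _), List.map_const', List.length_finRange,
    List.sum_replicate, smul_eq_mul, Nat.mul_succ]
  omega

theorem exists_isPath_length_add_one_eq (hmz : m ≤ #(sqrts (1 : G)))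
    (hmk : m ≤ #(squares G)) :
    ∃ (u v : GenDihedral G) (p : (commGraph G).Walk u v), p.IsPath ∧
      p.length + 1 = Fintype.card G + m * #(sqrts (1 : G)) := by
  obtain ⟨f, hf⟩ := Function.Embedding.exists_of_card_le_finset (α := Fin m)
    (by simpa using hmz)
  obtain ⟨g, hg⟩ := Function.Embedding.exists_of_card_le_finset (α := Fin m) (s := squares G)
    (by simpa using hmk)
  have hsq (i : Fin m) : f i ^ 2 = 1 := by simpa [sqrts] using hf ⟨i, rfl⟩
  have hlen := length_longPathSupport f fun i => hg ⟨i, rfl⟩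
  have hnodup := nodup_longPathSupport f g
  obtain ⟨u, v, p, hp, hp'⟩ := SimpleGraph.exists_isPath_of_isChain
    (List.ne_nil_of_length_pos (by have := Fintype.card_pos (α := G); omega))
    (isChain_adj_of_isChain_commute (isChain_commute_longPathSupport hsq g) hnodup) hnodup
  exact ⟨u, v, p, hp, hp'.trans hlen⟩

theorem isGreatest_length_isPath :
    IsGreatest
      {ℓ | ∃ (u v : GenDihedral G) (p : (commGraph G).Walk u v), p.IsPath ∧ p.length = ℓ}
      (Fintype.card G + min #(squares G) #(sqrts (1 : G)) * #(sqrts (1 : G)) - 1) := by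
  refine ⟨?_, ?_⟩
  · obtain ⟨u, v, p, hp, hlen⟩ := exists_isPath_length_add_one_eq
      (min_le_right #(squares G) _) (min_le_left _ _)
    exact ⟨u, v, p, hp, by omega⟩
  · rintro _ ⟨u, v, p, hp, rfl⟩
    rcases le_or_gt #(squares G) #(sqrts (1 : G)) with hkz | hzk
    · have := hp.support_nodup.length_le_card
      rw [Walk.length_support, card_genDihedral] at this
      rw [min_eq_left hkz, card_squares_mul_card_sqrts_one]
      omega
    · have := length_add_one_le_of_card_sqrts_lt hp hzk
      rw [min_eq_right hzk.le]
      omega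

end GenDihedral

open GenDihedral in
theorem stmt13_general {G : Type} [CommGroup G] [Fintype G] [DecidableEq G]
    (n z : ℕ) (hn : n = Fintype.card G)
    (hz : z = (Finset.univ.filter fun g : G => g ^ 2 = 1).card) :
    (⨆ v : GenDihedral G, detourEcc (commGraph G) v) =
      if n / z ≤ z then 2 * n - 1 else n + z ^ 2 - 1 := by
  have hz' : #(sqrts (1 : G)) = z := hz.symm
  have hnz : n = #(squares G) * z := by rw [hn, ← hz', card_squares_mul_card_sqrts_one]
  have hk : n / z = #(squares G) := by
    rw [hnz, Nat.mul_div_cancel _ (hz' ▸ one_le_card_sqrts_one)]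
  rw [iSup_detourEcc_eq_of_isGreatest isGreatest_length_isPath, hk, ← hn, hz']
  split_ifs with h
  · rw [min_eq_left h, ← hnz]
    omega
  · rw [min_eq_right (not_le.1 h).le, sq]

open GenDihedral in
/-- The detour diameter (maximum detour eccentricity) of the commuting graph of a
non-abelian `D(G)` equals `2n - 1` if `n/z ≤ z`, and `n + z² - 1` if `n/z > z`,
where `n = |G|` and `z = |{g : g² = e}|`. -/
theorem stmt13 {G : Type} [CommGroup G] [Fintype G] [DecidableEq G]
    (hna : ∃ g : G, g ^ 2 ≠ 1) (n z : ℕ) (hn : n = Fintype.card G)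
    (hz : z = (Finset.univ.filter fun g : G => g ^ 2 = 1).card) :
    (⨆ v : GenDihedral G, detourEcc (commGraph G) v) =
      if n / z ≤ z then 2 * n - 1 else n + z ^ 2 - 1 :=
  stmt13_general n z hn hz
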